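/- arXiv:math/0305136 — 3 statements merged into one kernel-verified Lean document; each statement's English description precedes it below -/
import Mathlib

section
/- The Fourier transformation F : C²(ι×ῑ, ι×ῑ) → C²(ῑ×ι, ῑ×ι) is an anti-multiplicative bijection from vertical composition to convolution, and multiplicative from convolution to vertical composition: F(a₁ ∘ a₂) = F(a₂) ∗ F(a₁) and F(a₁ ∗ a₂) = F(a₁) ∘ F(a₂). -/
open CategoryTheory Bicategory

universe w v u

variable {C : Type u} [Bicategory.{w, v} C] {a b : C}

/-- Duality data exhibiting `κ` as a two-sided dual of `ι`: `(evL, coevL)` exhibit a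
left-dual pair and `(evR, coevR)` a right-dual pair, all four snake identities holding. -/
structure FrobeniusDuality (ι : a ⟶ b) (κ : b ⟶ a) where
  evL : κ ≫ ι ⟶ 𝟙 b
  coevL : 𝟙 a ⟶ ι ≫ κ
  evR : ι ≫ κ ⟶ 𝟙 a
  coevR : 𝟙 b ⟶ κ ≫ ι
  zig1 : (λ_ ι).inv ≫ coevL ▷ ι ≫ (α_ ι κ ι).hom ≫ ι ◁ evL ≫ (ρ_ ι).hom = 𝟙 ι
  zig2 : (ρ_ κ).inv ≫ κ ◁ coevL ≫ (α_ κ ι κ).inv ≫ evL ▷ κ ≫ (λ_ κ).hom = 𝟙 κ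
  zig3 : (ρ_ ι).inv ≫ ι ◁ coevR ≫ (α_ ι κ ι).inv ≫ evR ▷ ι ≫ (λ_ ι).hom = 𝟙 ι
  zig4 : (λ_ κ).inv ≫ coevR ▷ κ ≫ (α_ κ ι κ).hom ≫ κ ◁ evR ≫ (ρ_ κ).hom = 𝟙 κ

namespace FrobeniusDuality

variable {ι : a ⟶ b} {κ : b ⟶ a} (D : FrobeniusDuality ι κ)

/-- The Fourier transformation `F`, bending the legs of a 2-endomorphism of `ι ≫ κ`
using `coevR` and `evL`. -/
def Ftr (x : ι ≫ κ ⟶ ι ≫ κ) : κ ≫ ι ⟶ κ ≫ ι :=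
  (λ_ (κ ≫ ι)).inv ≫ D.coevR ▷ (κ ≫ ι) ≫ (α_ κ ι (κ ≫ ι)).hom ≫
    κ ◁ ((α_ ι κ ι).inv ≫ x ▷ ι ≫ (α_ ι κ ι).hom) ≫
    (α_ κ ι (κ ≫ ι)).inv ≫ (κ ≫ ι) ◁ D.evL ≫ (ρ_ (κ ≫ ι)).hom

/-- The inverse Fourier transformation, bending legs using `coevL` and `evR`. -/
def FtrInv (y : κ ≫ ι ⟶ κ ≫ ι) : ι ≫ κ ⟶ ι ≫ κ :=
  (ρ_ (ι ≫ κ)).inv ≫ (ι ≫ κ) ◁ D.coevL ≫ (α_ ι κ (ι ≫ κ)).hom ≫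
    ι ◁ ((α_ κ ι κ).inv ≫ y ▷ κ ≫ (α_ κ ι κ).hom) ≫
    (α_ ι κ (ι ≫ κ)).inv ≫ D.evR ▷ (ι ≫ κ) ≫ (λ_ (ι ≫ κ)).hom

/-- The second Fourier transformation `Ḟ`, with `coevR` and `evL` attached on the other sides. -/
def Fdot (x : ι ≫ κ ⟶ ι ≫ κ) : κ ≫ ι ⟶ κ ≫ ι :=
  (ρ_ (κ ≫ ι)).inv ≫ (κ ≫ ι) ◁ D.coevR ≫ (α_ κ ι (κ ≫ ι)).hom ≫
    κ ◁ ((α_ ι κ ι).inv ≫ x ▷ ι ≫ (α_ ι κ ι).hom) ≫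
    (α_ κ ι (κ ≫ ι)).inv ≫ D.evL ▷ (κ ≫ ι) ≫ (λ_ (κ ≫ ι)).hom

/-- The inverse of the second Fourier transformation. -/
def FdotInv (y : κ ≫ ι ⟶ κ ≫ ι) : ι ≫ κ ⟶ ι ≫ κ :=
  (λ_ (ι ≫ κ)).inv ≫ D.coevL ▷ (ι ≫ κ) ≫ (α_ ι κ (ι ≫ κ)).hom ≫
    ι ◁ ((α_ κ ι κ).inv ≫ y ▷ κ ≫ (α_ κ ι κ).hom) ≫
    (α_ ι κ (ι ≫ κ)).inv ≫ (ι ≫ κ) ◁ D.evR ≫ (ρ_ (ι ≫ κ)).hom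

/-- The convolution product on `C²(ι×κ, ι×κ)`, contracting the middle legs with
`coevR` and `evL`.  (Vertical composition in the paper is `x ∘ y = y ≫ x`.) -/
def conv (x y : ι ≫ κ ⟶ ι ≫ κ) : ι ≫ κ ⟶ ι ≫ κ :=
  ι ◁ (λ_ κ).inv ≫ ι ◁ (D.coevR ▷ κ) ≫ ι ◁ (α_ κ ι κ).hom ≫
    (α_ ι κ (ι ≫ κ)).inv ≫ x ▷ (ι ≫ κ) ≫ (ι ≫ κ) ◁ y ≫
    (α_ ι κ (ι ≫ κ)).hom ≫ ι ◁ (α_ κ ι κ).inv ≫ ι ◁ (D.evL ▷ κ) ≫ ι ◁ (λ_ κ).hom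

/-- The convolution product on `C²(κ×ι, κ×ι)`, contracting the middle legs with
`coevL` and `evR`. -/
def convB (x y : κ ≫ ι ⟶ κ ≫ ι) : κ ≫ ι ⟶ κ ≫ ι :=
  κ ◁ (λ_ ι).inv ≫ κ ◁ (D.coevL ▷ ι) ≫ κ ◁ (α_ ι κ ι).hom ≫
    (α_ κ ι (κ ≫ ι)).inv ≫ x ▷ (κ ≫ ι) ≫ (κ ≫ ι) ◁ y ≫
    (α_ κ ι (κ ≫ ι)).hom ≫ κ ◁ (α_ ι κ ι).inv ≫ κ ◁ (D.evR ▷ ι) ≫ κ ◁ (λ_ ι).hom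

/-- The convolution unit `i_A = coev_L ∘ ev_R`. -/
def iA : ι ≫ κ ⟶ ι ≫ κ := D.evR ≫ D.coevL

/-- The convolution unit `i_B = coev_R ∘ ev_L`. -/
def iB : κ ≫ ι ⟶ κ ≫ ι := D.evL ≫ D.coevR

/-- The antipode `S_A = Ḟ⁻¹ ∘ F`. -/
def SA (x : ι ≫ κ ⟶ ι ≫ κ) : ι ≫ κ ⟶ ι ≫ κ := D.FdotInv (D.Ftr x)

/-- The inverse antipode `S_A⁻¹ = F⁻¹ ∘ Ḟ`. -/
def SAinv (x : ι ≫ κ ⟶ ι ≫ κ) : ι ≫ κ ⟶ ι ≫ κ := D.FtrInv (D.Fdot x)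

/-- The anti-isomorphism `ν : L → R^op` (conjugation with `evR`/`coevR`). -/
def nu (l : ι ⟶ ι) : κ ⟶ κ :=
  (λ_ κ).inv ≫ D.coevR ▷ κ ≫ (α_ κ ι κ).hom ≫ κ ◁ (l ▷ κ) ≫ κ ◁ D.evR ≫ (ρ_ κ).hom

/-- The anti-isomorphism `μ : L → R^op` (conjugation with `evL`/`coevL`). -/
def mu (l : ι ⟶ ι) : κ ⟶ κ :=
  (ρ_ κ).inv ≫ κ ◁ D.coevL ≫ (α_ κ ι κ).inv ≫ (κ ◁ l) ▷ κ ≫ D.evL ▷ κ ≫ (λ_ κ).hom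

/-- The Frobenius map `φ_L : A → L`. -/
def phiL (x : ι ≫ κ ⟶ ι ≫ κ) : ι ⟶ ι :=
  (ρ_ ι).inv ≫ ι ◁ D.coevR ≫ (α_ ι κ ι).inv ≫ x ▷ ι ≫ (α_ ι κ ι).hom ≫ ι ◁ D.evL ≫ (ρ_ ι).hom

/-- Source map of the left bialgebroid `s_L : L → A`, `l ↦ l × κ`. -/
def sL (l : ι ⟶ ι) : ι ≫ κ ⟶ ι ≫ κ := l ▷ κ

/-- Target map of the left bialgebroid `t_L : L → A`, `l ↦ ι × μ(l)`. -/
def tL (l : ι ⟶ ι) : ι ≫ κ ⟶ ι ≫ κ := ι ◁ D.mu l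

/-- Source map of the right bialgebroid `s_R : R → A`, `r ↦ ι × r`. -/
def sR (r : κ ⟶ κ) : ι ≫ κ ⟶ ι ≫ κ := ι ◁ r

/-- Target map of the right bialgebroid `t_R : R → A`, `r ↦ ν⁻¹(r) × κ`. -/
noncomputable def tR (r : κ ⟶ κ) : ι ≫ κ ⟶ ι ≫ κ :=
  (@Function.invFun (ι ⟶ ι) (κ ⟶ κ) ⟨𝟙 ι⟩ D.nu r) ▷ κ

/-- The counit `π_L(a) = φ_L(a ∘ i_A)`. -/
def piL (x : ι ≫ κ ⟶ ι ≫ κ) : ι ⟶ ι := D.phiL (D.iA ≫ x)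

/-- The counit `π_R(a) = ν(φ_L(S_A⁻¹(a) ∘ i_A))`. -/
def piR (x : ι ≫ κ ⟶ ι ≫ κ) : κ ⟶ κ := D.nu (D.phiL (D.iA ≫ D.SAinv x))

/-- The composite `(y × ι) ∘ α⁻¹ ∘ (ι × coevR) ∘ (ι × evL) ∘ α ∘ (x × ι)` appearing in
the depth-2 quasi-basis identity. -/
def d2comp (x y : ι ≫ κ ⟶ ι ≫ κ) : (ι ≫ κ) ≫ ι ⟶ (ι ≫ κ) ≫ ι :=
  x ▷ ι ≫ (α_ ι κ ι).hom ≫ ι ◁ D.evL ≫ ι ◁ D.coevR ≫ (α_ ι κ ι).inv ≫ y ▷ ι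

end FrobeniusDuality

namespace FrobeniusDuality

variable {ι : a ⟶ b} {κ : b ⟶ a} (D : FrobeniusDuality ι κ)

lemma leftZigzag_coevL_evL : leftZigzag D.coevL D.evL = (λ_ ι).hom ≫ (ρ_ ι).inv :=
  calc
    _ = (λ_ ι).hom ≫ ((λ_ ι).inv ≫ D.coevL ▷ ι ≫ (α_ ι κ ι).hom ≫ ι ◁ D.evL ≫ (ρ_ ι).hom) ≫
        (ρ_ ι).inv := by bicategory
    _ = _ := by rw [D.zig1, Category.id_comp]

lemma rightZigzag_coevL_evL : rightZigzag D.coevL D.evL = (ρ_ κ).hom ≫ (λ_ κ).inv :=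
  calc
    _ = (ρ_ κ).hom ≫ ((ρ_ κ).inv ≫ κ ◁ D.coevL ≫ (α_ κ ι κ).inv ≫ D.evL ▷ κ ≫ (λ_ κ).hom) ≫
        (λ_ κ).inv := by bicategory
    _ = _ := by rw [D.zig2, Category.id_comp]

lemma leftZigzag_coevR_evR : leftZigzag D.coevR D.evR = (λ_ κ).hom ≫ (ρ_ κ).inv :=
  calc
    _ = (λ_ κ).hom ≫ ((λ_ κ).inv ≫ D.coevR ▷ κ ≫ (α_ κ ι κ).hom ≫ κ ◁ D.evR ≫ (ρ_ κ).hom) ≫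
        (ρ_ κ).inv := by bicategory
    _ = _ := by rw [D.zig4, Category.id_comp]

lemma rightZigzag_coevR_evR : rightZigzag D.coevR D.evR = (ρ_ ι).hom ≫ (λ_ ι).inv :=
  calc
    _ = (ρ_ ι).hom ≫ ((ρ_ ι).inv ≫ ι ◁ D.coevR ≫ (α_ ι κ ι).inv ≫ D.evR ▷ ι ≫ (λ_ ι).hom) ≫
        (λ_ ι).inv := by bicategory
    _ = _ := by rw [D.zig3, Category.id_comp]

def adjL : ι ⊣ κ :=
  ⟨D.coevL, D.evL, D.leftZigzag_coevL_evL, D.rightZigzag_coevL_evL⟩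

def adjR : κ ⊣ ι :=
  ⟨D.coevR, D.evR, D.leftZigzag_coevR_evR, D.rightZigzag_coevR_evR⟩

/-- `F` bends the left input leg of a 2-cell up along `κ ⊣ ι` and its right output leg down
along `ι ⊣ κ`; each bend is a bijection. -/
def fourierEquiv : (ι ≫ κ ⟶ ι ≫ κ) ≃ (κ ≫ ι ⟶ κ ≫ ι) :=
  D.adjR.homEquiv₁.symm.trans <|
    (Iso.homCongr (Iso.refl _) (α_ _ _ _).symm).trans D.adjL.homEquiv₂.symm

lemma coe_fourierEquiv : ⇑D.fourierEquiv = D.Ftr := by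
  ext x
  simp only [fourierEquiv, Equiv.trans_apply, Adjunction.homEquiv₁_symm_apply,
    Adjunction.homEquiv₂_symm_apply, Iso.homCongr_apply, Iso.refl_inv, Iso.symm_hom, Ftr, adjL,
    adjR]
  bicategory

lemma ftr_bijective : Function.Bijective D.Ftr :=
  D.coe_fourierEquiv ▸ D.fourierEquiv.bijective

/-- The snakes `coevL`–`evL` and `coevR`–`evR` formed by the legs of `F a₂` and `F a₁` inside
the convolution straighten out, leaving `a₂` followed by `a₁`. -/
lemma ftr_comp (a₁ a₂ : ι ≫ κ ⟶ ι ≫ κ) :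
    D.Ftr (a₂ ≫ a₁) = D.convB (D.Ftr a₂) (D.Ftr a₁) := by
  symm
  dsimp only [Ftr, convB]
  calc
    _ = 𝟙 (κ ≫ ι) ⊗≫
        (𝟙 b ◁ (κ ◁ (D.coevL ▷ ι)) ≫ D.coevR ▷ (κ ≫ (ι ≫ κ) ≫ ι)) ⊗≫
        κ ◁ (a₂ ▷ (ι ≫ κ ≫ ι)) ⊗≫ (κ ≫ ι) ◁ (D.evL ▷ (κ ≫ ι)) ⊗≫
        (κ ≫ ι) ◁ (D.coevR ▷ (κ ≫ ι)) ⊗≫ (κ ≫ ι ≫ κ) ◁ (a₁ ▷ ι) ⊗≫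
        (κ ≫ ι ≫ κ ≫ ι) ◁ D.evL ⊗≫ κ ◁ (D.evR ▷ ι) ⊗≫ 𝟙 (κ ≫ ι) := by
      bicategory
    _ = 𝟙 (κ ≫ ι) ⊗≫ D.coevR ▷ (κ ≫ ι) ⊗≫
        ((κ ≫ ι ≫ κ) ◁ (D.coevL ▷ ι) ≫ (κ ◁ a₂) ▷ ((ι ≫ κ) ≫ ι)) ⊗≫
        (κ ≫ ι) ◁ (D.evL ▷ (κ ≫ ι)) ⊗≫
        (κ ≫ ι) ◁ (D.coevR ▷ (κ ≫ ι)) ⊗≫ (κ ≫ ι ≫ κ) ◁ (a₁ ▷ ι) ⊗≫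
        (κ ≫ ι ≫ κ ≫ ι) ◁ D.evL ⊗≫ κ ◁ (D.evR ▷ ι) ⊗≫ 𝟙 (κ ≫ ι) := by
      rw [whisker_exchange]
      bicategory
    _ = 𝟙 (κ ≫ ι) ⊗≫ D.coevR ▷ (κ ≫ ι) ⊗≫ κ ◁ (a₂ ▷ ι) ⊗≫
        (κ ≫ ι) ◁ (rightZigzag D.coevL D.evL ▷ ι) ⊗≫
        (κ ≫ ι) ◁ (D.coevR ▷ (κ ≫ ι)) ⊗≫ (κ ≫ ι ≫ κ) ◁ (a₁ ▷ ι) ⊗≫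
        (κ ≫ ι ≫ κ ≫ ι) ◁ D.evL ⊗≫ κ ◁ (D.evR ▷ ι) ⊗≫ 𝟙 (κ ≫ ι) := by
      rw [whisker_exchange]
      bicategory
    _ = 𝟙 (κ ≫ ι) ⊗≫ D.coevR ▷ (κ ≫ ι) ⊗≫ κ ◁ (a₂ ▷ ι) ⊗≫
        (κ ≫ ι) ◁ (D.coevR ▷ (κ ≫ ι)) ⊗≫ (κ ≫ ι ≫ κ) ◁ (a₁ ▷ ι) ⊗≫
        ((κ ≫ ι ≫ κ) ◁ (ι ◁ D.evL) ≫ (κ ◁ D.evR) ▷ (ι ≫ 𝟙 b)) ⊗≫ 𝟙 (κ ≫ ι) := by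
      rw [D.rightZigzag_coevL_evL]
      bicategory
    _ = 𝟙 (κ ≫ ι) ⊗≫ D.coevR ▷ (κ ≫ ι) ⊗≫ κ ◁ (a₂ ▷ ι) ⊗≫
        (κ ≫ ι) ◁ (D.coevR ▷ (κ ≫ ι)) ⊗≫
        ((κ ≫ ι ≫ κ) ◁ (a₁ ▷ ι) ≫ (κ ◁ D.evR) ▷ ((ι ≫ κ) ≫ ι)) ⊗≫
        (κ ≫ ι) ◁ D.evL ⊗≫ 𝟙 (κ ≫ ι) := by
      rw [whisker_exchange]
      bicategory
    _ = 𝟙 (κ ≫ ι) ⊗≫ D.coevR ▷ (κ ≫ ι) ⊗≫ κ ◁ (a₂ ▷ ι) ⊗≫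
        κ ◁ (rightZigzag D.coevR D.evR ▷ (κ ≫ ι)) ⊗≫
        κ ◁ (a₁ ▷ ι) ⊗≫ (κ ≫ ι) ◁ D.evL ⊗≫ 𝟙 (κ ≫ ι) := by
      rw [whisker_exchange]
      bicategory
    _ = _ := by
      rw [D.rightZigzag_coevR_evR]
      bicategory

/-- Both sides paste the same 2-cells along the same `coevR`s and `evL`s, so the interchange law
alone suffices. -/
lemma ftr_conv (a₁ a₂ : ι ≫ κ ⟶ ι ≫ κ) :
    D.Ftr (D.conv a₁ a₂) = D.Ftr a₂ ≫ D.Ftr a₁ := by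
  dsimp only [Ftr, conv]
  calc
    _ = 𝟙 (κ ≫ ι) ⊗≫ D.coevR ▷ (κ ≫ ι) ⊗≫ (κ ≫ ι) ◁ (D.coevR ▷ (κ ≫ ι)) ⊗≫
        ((κ ◁ a₁) ▷ ((ι ≫ κ) ≫ ι) ≫ (κ ≫ ι ≫ κ) ◁ (a₂ ▷ ι)) ⊗≫
        (κ ≫ ι) ◁ (D.evL ▷ (κ ≫ ι)) ⊗≫ (κ ≫ ι) ◁ D.evL ⊗≫ 𝟙 (κ ≫ ι) := by
      bicategory
    _ = 𝟙 (κ ≫ ι) ⊗≫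
        (D.coevR ▷ (𝟙 b ≫ κ ≫ ι) ≫ (κ ≫ ι) ◁ (D.coevR ▷ (κ ≫ ι))) ⊗≫
        (κ ≫ ι ≫ κ) ◁ (a₂ ▷ ι) ⊗≫ κ ◁ (a₁ ▷ (ι ≫ κ ≫ ι)) ⊗≫
        (κ ≫ ι) ◁ (D.evL ▷ (κ ≫ ι)) ⊗≫ (κ ≫ ι) ◁ D.evL ⊗≫ 𝟙 (κ ≫ ι) := by
      rw [← whisker_exchange]
      bicategory
    _ = 𝟙 (κ ≫ ι) ⊗≫ D.coevR ▷ (κ ≫ ι) ⊗≫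
        (D.coevR ▷ (κ ≫ (ι ≫ κ) ≫ ι) ≫ (κ ≫ ι) ◁ (κ ◁ (a₂ ▷ ι))) ⊗≫
        κ ◁ (a₁ ▷ (ι ≫ κ ≫ ι)) ⊗≫
        (κ ≫ ι) ◁ (D.evL ▷ (κ ≫ ι)) ⊗≫ (κ ≫ ι) ◁ D.evL ⊗≫ 𝟙 (κ ≫ ι) := by
      rw [← whisker_exchange]
      bicategory
    _ = 𝟙 (κ ≫ ι) ⊗≫ D.coevR ▷ (κ ≫ ι) ⊗≫ κ ◁ (a₂ ▷ ι) ⊗≫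
        D.coevR ▷ (κ ≫ ι ≫ κ ≫ ι) ⊗≫ κ ◁ (a₁ ▷ (ι ≫ κ ≫ ι)) ⊗≫
        (((κ ≫ ι) ◁ D.evL) ▷ (κ ≫ ι) ≫ ((κ ≫ ι) ≫ 𝟙 b) ◁ D.evL) ⊗≫ 𝟙 (κ ≫ ι) := by
      rw [← whisker_exchange]
      bicategory
    _ = 𝟙 (κ ≫ ι) ⊗≫ D.coevR ▷ (κ ≫ ι) ⊗≫ κ ◁ (a₂ ▷ ι) ⊗≫
        D.coevR ▷ (κ ≫ ι ≫ κ ≫ ι) ⊗≫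
        ((κ ◁ a₁) ▷ (ι ≫ κ ≫ ι) ≫ (κ ≫ ι ≫ κ) ◁ (ι ◁ D.evL)) ⊗≫
        (κ ≫ ι) ◁ D.evL ⊗≫ 𝟙 (κ ≫ ι) := by
      rw [← whisker_exchange]
      bicategory
    _ = 𝟙 (κ ≫ ι) ⊗≫ D.coevR ▷ (κ ≫ ι) ⊗≫ κ ◁ (a₂ ▷ ι) ⊗≫
        (D.coevR ▷ ((κ ≫ ι) ≫ κ ≫ ι) ≫ (κ ≫ ι) ◁ ((κ ≫ ι) ◁ D.evL)) ⊗≫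
        κ ◁ (a₁ ▷ ι) ⊗≫ (κ ≫ ι) ◁ D.evL ⊗≫ 𝟙 (κ ≫ ι) := by
      rw [← whisker_exchange]
      bicategory
    _ = _ := by
      rw [← whisker_exchange]
      bicategory

end FrobeniusDuality

open FrobeniusDuality in
theorem fourier_transform_multiplicativity_general
    {C : Type u} [Bicategory.{w, v} C]
    {a b : C} {ι : a ⟶ b} {κ : b ⟶ a} (D : FrobeniusDuality ι κ) :
    Function.Bijective D.Ftr ∧
      (∀ a₁ a₂ : ι ≫ κ ⟶ ι ≫ κ, D.Ftr (a₂ ≫ a₁) = D.convB (D.Ftr a₂) (D.Ftr a₁)) ∧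
      (∀ a₁ a₂ : ι ≫ κ ⟶ ι ≫ κ, D.Ftr (D.conv a₁ a₂) = D.Ftr a₂ ≫ D.Ftr a₁) :=
  ⟨D.ftr_bijective, D.ftr_comp, D.ftr_conv⟩

open FrobeniusDuality in
/-- The Fourier transformation `F : C²(ι×κ,ι×κ) → C²(κ×ι,κ×ι)` is a
bijection which is anti-multiplicative from vertical composition to convolution, and
multiplicative from convolution to vertical composition:
`F(a₁ ∘ a₂) = F(a₂) ∗ F(a₁)` and `F(a₁ ∗ a₂) = F(a₁) ∘ F(a₂)`.
(Vertical composition `x ∘ y` of the paper is `y ≫ x` here.) -/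
theorem fourier_transform_multiplicativity
    {C : Type u} [Bicategory.{w, v} C] [∀ (x y : C), Preadditive (x ⟶ y)]
    {a b : C} {ι : a ⟶ b} {κ : b ⟶ a} (D : FrobeniusDuality ι κ) :
    Function.Bijective D.Ftr ∧
      (∀ a₁ a₂ : ι ≫ κ ⟶ ι ≫ κ, D.Ftr (a₂ ≫ a₁) = D.convB (D.Ftr a₂) (D.Ftr a₁)) ∧
      (∀ a₁ a₂ : ι ≫ κ ⟶ ι ≫ κ, D.Ftr (D.conv a₁ a₂) = D.Ftr a₂ ≫ D.Ftr a₁) :=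
  fourier_transform_multiplicativity_general D
end

section
/- Let ι be a Frobenius 1-morphism in an additive bicategory. Then ι satisfies the left depth-2 condition (i.e., (ι×ῑ)×ι is a direct summand of a finite direct sum of copies of ι) if and only if there exists a finite family (yᵢ, xᵢ) of 2-endomorphisms of ι×ῑ such that ∑ᵢ (yᵢ × ι) ∘ (ι × coev_R) ∘ (ι × ev_L) ∘ (xᵢ × ι) = id_{(ι×ῑ)×ι} (with appropriate associators). -/
/-!
`(coevL, evL)` exhibits `ι ⊣ κ` and `(coevR, evR)` exhibits `κ ⊣ ι`. The hom-bijections of these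
two adjunctions identify 2-cells `(ι ≫ κ) ≫ ι ⟶ ι` and `ι ⟶ (ι ≫ κ) ≫ ι` with 2-endomorphisms
of `ι ≫ κ`, and under them the composite `β ≫ β'` becomes `d2comp x y`. So the splittings of
the identity in the two conditions correspond term by term.
-/

open CategoryTheory Bicategory

universe w v u

variable {C : Type u} [Bicategory.{w, v} C] {a b : C}

theorem leftZigzag_eq_of_snake {f : a ⟶ b} {g : b ⟶ a} {η : 𝟙 a ⟶ f ≫ g} {ϵ : g ≫ f ⟶ 𝟙 b}
    (h : (λ_ f).inv ≫ η ▷ f ≫ (α_ f g f).hom ≫ f ◁ ϵ ≫ (ρ_ f).hom = 𝟙 f) :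
    leftZigzag η ϵ = (λ_ f).hom ≫ (ρ_ f).inv :=
  calc leftZigzag η ϵ
      = (λ_ f).hom ≫ ((λ_ f).inv ≫ η ▷ f ≫ (α_ f g f).hom ≫ f ◁ ϵ ≫ (ρ_ f).hom) ≫ (ρ_ f).inv := by
        rw [leftZigzag]; bicategory
    _ = (λ_ f).hom ≫ (ρ_ f).inv := by rw [h, Category.id_comp]

theorem rightZigzag_eq_of_snake {f : a ⟶ b} {g : b ⟶ a} {η : 𝟙 a ⟶ f ≫ g} {ϵ : g ≫ f ⟶ 𝟙 b}
    (h : (ρ_ g).inv ≫ g ◁ η ≫ (α_ g f g).inv ≫ ϵ ▷ g ≫ (λ_ g).hom = 𝟙 g) :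
    rightZigzag η ϵ = (ρ_ g).hom ≫ (λ_ g).inv :=
  calc rightZigzag η ϵ
      = (ρ_ g).hom ≫ ((ρ_ g).inv ≫ g ◁ η ≫ (α_ g f g).inv ≫ ϵ ▷ g ≫ (λ_ g).hom) ≫ (λ_ g).inv := by
        rw [rightZigzag]; bicategory
    _ = (ρ_ g).hom ≫ (λ_ g).inv := by rw [h, Category.id_comp]

namespace FrobeniusDuality

variable {ι : a ⟶ b} {κ : b ⟶ a} (D : FrobeniusDuality ι κ)

def leftAdjunction : ι ⊣ κ where
  unit := D.coevL
  counit := D.evL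
  left_triangle := leftZigzag_eq_of_snake D.zig1
  right_triangle := rightZigzag_eq_of_snake D.zig2

def rightAdjunction : κ ⊣ ι where
  unit := D.coevR
  counit := D.evR
  left_triangle := leftZigzag_eq_of_snake D.zig4
  right_triangle := rightZigzag_eq_of_snake D.zig3

theorem d2comp_eq_homEquiv (x y : ι ≫ κ ⟶ ι ≫ κ) :
    D.d2comp x y =
      D.leftAdjunction.homEquiv₂.symm x ≫ D.rightAdjunction.homEquiv₂ y := by
  simp [d2comp, Adjunction.homEquiv₂_apply, Adjunction.homEquiv₂_symm_apply, leftAdjunction,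
    rightAdjunction]

end FrobeniusDuality

open FrobeniusDuality in
theorem left_depth_two_iff_quasi_basis_general
    {C : Type u} [Bicategory.{w, v} C] [∀ (x y : C), Preadditive (x ⟶ y)]
    {a b : C} {ι : a ⟶ b} {κ : b ⟶ a} (D : FrobeniusDuality ι κ) :
    (∃ (n : ℕ) (β : ℕ → ((ι ≫ κ) ≫ ι ⟶ ι)) (β' : ℕ → (ι ⟶ (ι ≫ κ) ≫ ι)),
        ∑ i ∈ Finset.range n, β i ≫ β' i = 𝟙 ((ι ≫ κ) ≫ ι)) ↔
      (∃ (n : ℕ) (y x : ℕ → (ι ≫ κ ⟶ ι ≫ κ)),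
        ∑ i ∈ Finset.range n, D.d2comp (x i) (y i) = 𝟙 ((ι ≫ κ) ≫ ι)) := by
  simp only [d2comp_eq_homEquiv]
  constructor
  · rintro ⟨n, β, β', h⟩
    refine ⟨n, fun i => D.rightAdjunction.homEquiv₂.symm (β' i),
      fun i => D.leftAdjunction.homEquiv₂ (β i), ?_⟩
    simpa only [Equiv.symm_apply_apply, Equiv.apply_symm_apply] using h
  · rintro ⟨n, y, x, h⟩
    exact ⟨n, fun i => D.leftAdjunction.homEquiv₂.symm (x i),
      fun i => D.rightAdjunction.homEquiv₂ (y i), h⟩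

open FrobeniusDuality in
/-- A Frobenius 1-morphism `ι` in an additive bicategory satisfies the left
depth-2 condition — `(ι×κ)×ι` is a direct summand of a finite direct sum of copies of `ι` —
iff there is a finite family `(yᵢ, xᵢ)` of 2-endomorphisms of `ι×κ` with
`∑ᵢ (yᵢ × ι) ∘ (ι × coevR) ∘ (ι × evL) ∘ (xᵢ × ι) = id` (with appropriate associators). -/
theorem left_depth_two_iff_quasi_basis
    {C : Type u} [Bicategory.{w, v} C] [∀ (x y : C), Preadditive (x ⟶ y)]
    (wl : ∀ {x y z : C} (f : x ⟶ y) {g h : y ⟶ z} (η θ : g ⟶ h),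
      f ◁ (η + θ) = f ◁ η + f ◁ θ)
    (wr : ∀ {x y z : C} {f g : x ⟶ y} (η θ : f ⟶ g) (h : y ⟶ z),
      (η + θ) ▷ h = η ▷ h + θ ▷ h)
    {a b : C} {ι : a ⟶ b} {κ : b ⟶ a} (D : FrobeniusDuality ι κ) :
    (∃ (n : ℕ) (β : ℕ → ((ι ≫ κ) ≫ ι ⟶ ι)) (β' : ℕ → (ι ⟶ (ι ≫ κ) ≫ ι)),
        ∑ i ∈ Finset.range n, β i ≫ β' i = 𝟙 ((ι ≫ κ) ≫ ι)) ↔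
      (∃ (n : ℕ) (y x : ℕ → (ι ≫ κ ⟶ ι ≫ κ)),
        ∑ i ∈ Finset.range n, D.d2comp (x i) (y i) = 𝟙 ((ι ≫ κ) ≫ ι)) :=
  left_depth_two_iff_quasi_basis_general D
end

section
/- In a Hopf algebroid (A_L, A_R, S), an element Υ ∈ A is a right integral (Υa = Υ s_R(π_R(a)) for all a) if and only if S(Υ) is a left integral (a S(Υ) = s_L(π_L(a)) S(Υ) for all a), and if and only if S⁻¹(Υ) is a left integral. -/
universe u

/-- A Böhm–Szlachányi Hopf algebroid with total ring `A`, left bialgebroid structure over `L`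
and right bialgebroid structure over `R`.  The coproducts `γ_L(a) = ∑ᵢ c1 a i ⊗ c2 a i`
(`i < nL a`) and `γ_R(a) = ∑ᵢ d1 a i ⊗ d2 a i` (`i < nR a`) are recorded by chosen
representatives; all identities involving them are stated by evaluation against arbitrary
balanced biadditive maps, which is exactly equality in the corresponding tensor product
over the (non-commutative) base ring.  Multiplication in `A` is written in the same order
as in the paper. -/
structure HopfAlgebroidData (A L R : Type u) [Ring A] [Ring L] [Ring R] where
  sL : L → A
  tL : L → A
  sR : R → A
  tR : R → A
  sL_one : sL 1 = 1
  sL_add : ∀ x y, sL (x + y) = sL x + sL y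
  sL_mul : ∀ x y, sL (x * y) = sL x * sL y
  tL_one : tL 1 = 1
  tL_add : ∀ x y, tL (x + y) = tL x + tL y
  tL_mul : ∀ x y, tL (x * y) = tL y * tL x
  sR_one : sR 1 = 1
  sR_add : ∀ x y, sR (x + y) = sR x + sR y
  sR_mul : ∀ x y, sR (x * y) = sR x * sR y
  tR_one : tR 1 = 1
  tR_add : ∀ x y, tR (x + y) = tR x + tR y
  tR_mul : ∀ x y, tR (x * y) = tR y * tR x
  commL : ∀ l l', sL l * tL l' = tL l' * sL l
  commR : ∀ r r', sR r * tR r' = tR r' * sR r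
  /-- number of terms of `γ_L a` -/
  nL : A → ℕ
  c1 : A → ℕ → A
  c2 : A → ℕ → A
  πL : A → L
  /-- number of terms of `γ_R a` -/
  nR : A → ℕ
  d1 : A → ℕ → A
  d2 : A → ℕ → A
  πR : A → R
  S : A → A
  Sinv : A → A
  -- `γ_L` is additive, a bimodule map `_L A _L → A_L ⊗_L {}_L A`
  -- (with `l·a·l' = sL l * tL l' * a`, balanced maps satisfy `f (tL l * u) v = f u (sL l * v)`)
  comulL_add : ∀ {M : Type u} [AddCommGroup M] (f : A → A → M),
    (∀ u u' v, f (u + u') v = f u v + f u' v) →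
    (∀ u v v', f u (v + v') = f u v + f u v') →
    (∀ l u v, f (tL l * u) v = f u (sL l * v)) →
    ∀ a b, (∑ i ∈ Finset.range (nL (a + b)), f (c1 (a + b) i) (c2 (a + b) i)) =
      (∑ i ∈ Finset.range (nL a), f (c1 a i) (c2 a i)) +
      (∑ i ∈ Finset.range (nL b), f (c1 b i) (c2 b i))
  comulL_bimod : ∀ {M : Type u} [AddCommGroup M] (f : A → A → M),
    (∀ u u' v, f (u + u') v = f u v + f u' v) →
    (∀ u v v', f u (v + v') = f u v + f u v') →
    (∀ l u v, f (tL l * u) v = f u (sL l * v)) →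
    ∀ (l l' : L) a,
      (∑ i ∈ Finset.range (nL (sL l * tL l' * a)),
        f (c1 (sL l * tL l' * a) i) (c2 (sL l * tL l' * a) i)) =
      (∑ i ∈ Finset.range (nL a), f (sL l * c1 a i) (tL l' * c2 a i))
  comulL_coassoc : ∀ {M : Type u} [AddCommGroup M] (g : A → A → A → M),
    (∀ u u' v w, g (u + u') v w = g u v w + g u' v w) →
    (∀ u v v' w, g u (v + v') w = g u v w + g u v' w) →
    (∀ u v w w', g u v (w + w') = g u v w + g u v w') →
    (∀ l u v w, g (tL l * u) v w = g u (sL l * v) w) →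
    (∀ l u v w, g u (tL l * v) w = g u v (sL l * w)) →
    ∀ a, (∑ i ∈ Finset.range (nL a), ∑ j ∈ Finset.range (nL (c1 a i)),
        g (c1 (c1 a i) j) (c2 (c1 a i) j) (c2 a i)) =
      (∑ i ∈ Finset.range (nL a), ∑ j ∈ Finset.range (nL (c2 a i)),
        g (c1 a i) (c1 (c2 a i) j) (c2 (c2 a i) j))
  comulL_takeuchi : ∀ {M : Type u} [AddCommGroup M] (f : A → A → M),
    (∀ u u' v, f (u + u') v = f u v + f u' v) →
    (∀ u v v', f u (v + v') = f u v + f u v') →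
    (∀ l u v, f (tL l * u) v = f u (sL l * v)) →
    ∀ (l : L) a, (∑ i ∈ Finset.range (nL a), f (c1 a i * tL l) (c2 a i)) =
      (∑ i ∈ Finset.range (nL a), f (c1 a i) (c2 a i * sL l))
  comulL_one : ∀ {M : Type u} [AddCommGroup M] (f : A → A → M),
    (∀ u u' v, f (u + u') v = f u v + f u' v) →
    (∀ u v v', f u (v + v') = f u v + f u v') →
    (∀ l u v, f (tL l * u) v = f u (sL l * v)) →
    (∑ i ∈ Finset.range (nL 1), f (c1 1 i) (c2 1 i)) = f 1 1
  comulL_mul : ∀ {M : Type u} [AddCommGroup M] (f : A → A → M),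
    (∀ u u' v, f (u + u') v = f u v + f u' v) →
    (∀ u v v', f u (v + v') = f u v + f u v') →
    (∀ l u v, f (tL l * u) v = f u (sL l * v)) →
    ∀ a b, (∑ i ∈ Finset.range (nL (a * b)), f (c1 (a * b) i) (c2 (a * b) i)) =
      (∑ i ∈ Finset.range (nL a), ∑ j ∈ Finset.range (nL b),
        f (c1 a i * c1 b j) (c2 a i * c2 b j))
  πL_one : πL 1 = 1
  πL_add : ∀ a b, πL (a + b) = πL a + πL b
  counitL_left : ∀ a, (∑ i ∈ Finset.range (nL a), sL (πL (c1 a i)) * c2 a i) = a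
  counitL_right : ∀ a, (∑ i ∈ Finset.range (nL a), tL (πL (c2 a i)) * c1 a i) = a
  πL_runit : ∀ a b, πL (a * sL (πL b)) = πL (a * b)
  πL_runit' : ∀ a b, πL (a * tL (πL b)) = πL (a * b)
  -- right bialgebroid data (`r·a·r' = a * sR r' * tR r`, balanced maps satisfy
  -- `f (u * sR r) v = f u (v * tR r)`)
  comulR_add : ∀ {M : Type u} [AddCommGroup M] (f : A → A → M),
    (∀ u u' v, f (u + u') v = f u v + f u' v) →
    (∀ u v v', f u (v + v') = f u v + f u v') →
    (∀ r u v, f (u * sR r) v = f u (v * tR r)) →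
    ∀ a b, (∑ i ∈ Finset.range (nR (a + b)), f (d1 (a + b) i) (d2 (a + b) i)) =
      (∑ i ∈ Finset.range (nR a), f (d1 a i) (d2 a i)) +
      (∑ i ∈ Finset.range (nR b), f (d1 b i) (d2 b i))
  comulR_bimod : ∀ {M : Type u} [AddCommGroup M] (f : A → A → M),
    (∀ u u' v, f (u + u') v = f u v + f u' v) →
    (∀ u v v', f u (v + v') = f u v + f u v') →
    (∀ r u v, f (u * sR r) v = f u (v * tR r)) →
    ∀ (r r' : R) a,
      (∑ i ∈ Finset.range (nR (a * sR r' * tR r)),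
        f (d1 (a * sR r' * tR r) i) (d2 (a * sR r' * tR r) i)) =
      (∑ i ∈ Finset.range (nR a), f (d1 a i * tR r) (d2 a i * sR r'))
  comulR_coassoc : ∀ {M : Type u} [AddCommGroup M] (g : A → A → A → M),
    (∀ u u' v w, g (u + u') v w = g u v w + g u' v w) →
    (∀ u v v' w, g u (v + v') w = g u v w + g u v' w) →
    (∀ u v w w', g u v (w + w') = g u v w + g u v w') →
    (∀ r u v w, g (u * sR r) v w = g u (v * tR r) w) →
    (∀ r u v w, g u (v * sR r) w = g u v (w * tR r)) →
    ∀ a, (∑ i ∈ Finset.range (nR a), ∑ j ∈ Finset.range (nR (d1 a i)),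
        g (d1 (d1 a i) j) (d2 (d1 a i) j) (d2 a i)) =
      (∑ i ∈ Finset.range (nR a), ∑ j ∈ Finset.range (nR (d2 a i)),
        g (d1 a i) (d1 (d2 a i) j) (d2 (d2 a i) j))
  comulR_takeuchi : ∀ {M : Type u} [AddCommGroup M] (f : A → A → M),
    (∀ u u' v, f (u + u') v = f u v + f u' v) →
    (∀ u v v', f u (v + v') = f u v + f u v') →
    (∀ r u v, f (u * sR r) v = f u (v * tR r)) →
    ∀ (r : R) a, (∑ i ∈ Finset.range (nR a), f (sR r * d1 a i) (d2 a i)) =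
      (∑ i ∈ Finset.range (nR a), f (d1 a i) (tR r * d2 a i))
  comulR_one : ∀ {M : Type u} [AddCommGroup M] (f : A → A → M),
    (∀ u u' v, f (u + u') v = f u v + f u' v) →
    (∀ u v v', f u (v + v') = f u v + f u v') →
    (∀ r u v, f (u * sR r) v = f u (v * tR r)) →
    (∑ i ∈ Finset.range (nR 1), f (d1 1 i) (d2 1 i)) = f 1 1
  comulR_mul : ∀ {M : Type u} [AddCommGroup M] (f : A → A → M),
    (∀ u u' v, f (u + u') v = f u v + f u' v) →
    (∀ u v v', f u (v + v') = f u v + f u v') →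
    (∀ r u v, f (u * sR r) v = f u (v * tR r)) →
    ∀ a b, (∑ i ∈ Finset.range (nR (a * b)), f (d1 (a * b) i) (d2 (a * b) i)) =
      (∑ i ∈ Finset.range (nR a), ∑ j ∈ Finset.range (nR b),
        f (d1 a i * d1 b j) (d2 a i * d2 b j))
  πR_one : πR 1 = 1
  πR_add : ∀ a b, πR (a + b) = πR a + πR b
  counitR_left : ∀ a, (∑ i ∈ Finset.range (nR a), d1 a i * sR (πR (d2 a i))) = a
  counitR_right : ∀ a, (∑ i ∈ Finset.range (nR a), d2 a i * tR (πR (d1 a i))) = a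
  πR_lunit : ∀ a b, πR (sR (πR a) * b) = πR (a * b)
  πR_lunit' : ∀ a b, πR (tR (πR a) * b) = πR (a * b)
  -- Hopf algebroid axioms
  range_sL_tR : Set.range sL = Set.range tR
  range_tL_sR : Set.range tL = Set.range sR
  mixed₁ : ∀ {M : Type u} [AddCommGroup M] (g : A → A → A → M),
    (∀ u u' v w, g (u + u') v w = g u v w + g u' v w) →
    (∀ u v v' w, g u (v + v') w = g u v w + g u v' w) →
    (∀ u v w w', g u v (w + w') = g u v w + g u v w') →
    (∀ l u v w, g (tL l * u) v w = g u (sL l * v) w) →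
    (∀ r u v w, g u (v * sR r) w = g u v (w * tR r)) →
    ∀ a, (∑ i ∈ Finset.range (nR a), ∑ j ∈ Finset.range (nL (d1 a i)),
        g (c1 (d1 a i) j) (c2 (d1 a i) j) (d2 a i)) =
      (∑ i ∈ Finset.range (nL a), ∑ j ∈ Finset.range (nR (c2 a i)),
        g (c1 a i) (d1 (c2 a i) j) (d2 (c2 a i) j))
  mixed₂ : ∀ {M : Type u} [AddCommGroup M] (g : A → A → A → M),
    (∀ u u' v w, g (u + u') v w = g u v w + g u' v w) →
    (∀ u v v' w, g u (v + v') w = g u v w + g u v' w) →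
    (∀ u v w w', g u v (w + w') = g u v w + g u v w') →
    (∀ r u v w, g (u * sR r) v w = g u (v * tR r) w) →
    (∀ l u v w, g u (tL l * v) w = g u v (sL l * w)) →
    ∀ a, (∑ i ∈ Finset.range (nL a), ∑ j ∈ Finset.range (nR (c1 a i)),
        g (d1 (c1 a i) j) (d2 (c1 a i) j) (c2 a i)) =
      (∑ i ∈ Finset.range (nR a), ∑ j ∈ Finset.range (nL (d2 a i)),
        g (d1 a i) (c1 (d2 a i) j) (c2 (d2 a i) j))
  S_add : ∀ a b, S (a + b) = S a + S b
  S_leftinv : ∀ a, Sinv (S a) = a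
  S_rightinv : ∀ a, S (Sinv a) = a
  S_twistL : ∀ l l' a, S (tL l * a * tL l') = sL l' * S a * sL l
  S_twistR : ∀ r r' a, S (tR r' * a * tR r) = sR r * S a * sR r'
  antipode_L : ∀ a, (∑ i ∈ Finset.range (nL a), S (c1 a i) * c2 a i) = sR (πR a)
  antipode_R : ∀ a, (∑ i ∈ Finset.range (nR a), d1 a i * S (d2 a i)) = sL (πL a)

/-! Since `S` is bijective and anti-multiplicative, `a * S Υ = S (Υ * S⁻¹ a)`. Both integral
conditions say that a product is constant on the fibres of a counit (because
`π_R (s_R (π_R a)) = π_R a`, and likewise for `π_L`), so `S Υ` is a left integral iff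
`Υ * a = Υ * b` whenever `π_L (S a) = π_L (S b)`. These fibres are those of `π_R`, since
`π_L ∘ S = π_L ∘ s_R ∘ π_R` and `π_R ∘ S⁻¹ = π_R ∘ t_L ∘ π_L`; both follow from the counit
axioms and the antipode axioms (transported by `S⁻¹` for the second). The same argument, with
`π_L ∘ S⁻¹ = π_L ∘ t_R ∘ π_R` and `π_R ∘ S = π_R ∘ s_L ∘ π_L`, handles `S⁻¹ Υ`.

Anti-multiplicativity of `S`: the counit, the antipode axiom and mixed coassociativity give
`S(xy) = S(x⁽¹⁾₍₁₎ y) x⁽¹⁾₍₂₎ S(x⁽²⁾)`; the same moves on `y`, followed by the antipode axiom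
for a product, give `S(p₍₁₎ y) p₍₂₎ = S(y) s_R(π_R p)`. Hence
`S(xy) = S(y) s_R(π_R x⁽¹⁾) S(x⁽²⁾) = S(y) S(x)`. -/

theorem forall_mul_eq_mul_iff_of_antimultiplicative {A P : Type*} [Mul A] (e : A ≃ A)
    (he : ∀ a b, e (a * b) = e b * e a) (p : A → P) (x : A) :
    (∀ a b, p a = p b → a * e x = b * e x) ↔ ∀ a b, p (e a) = p (e b) → x * a = x * b := by
  refine ⟨fun h a b hab => e.injective ?_, fun h a b hab => ?_⟩
  · rw [he, he]
    exact h _ _ hab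
  · obtain ⟨a, rfl⟩ := e.surjective a
    obtain ⟨b, rfl⟩ := e.surjective b
    rw [← he, ← he, h a b hab]

namespace HopfAlgebroidData

open Finset

variable {A L R : Type u} [Ring A] [Ring L] [Ring R] (H : HopfAlgebroidData A L R)

theorem S_tL_mul (l : L) (u : A) : H.S (H.tL l * u) = H.S u * H.sL l := by
  simpa [H.tL_one, H.sL_one] using H.S_twistL l 1 u

theorem S_mul_tR (u : A) (r : R) : H.S (u * H.tR r) = H.sR r * H.S u := by
  simpa [H.tR_one, H.sR_one] using H.S_twistR r 1 u

theorem S_tR_mul (r : R) (u : A) : H.S (H.tR r * u) = H.S u * H.sR r := by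
  simpa [H.tR_one, H.sR_one] using H.S_twistR 1 r u

def antipodeAddEquiv : A ≃+ A where
  toFun := H.S
  invFun := H.Sinv
  left_inv := H.S_leftinv
  right_inv := H.S_rightinv
  map_add' := H.S_add

theorem S_sum {ι : Type*} (s : Finset ι) (f : ι → A) :
    H.S (∑ i ∈ s, f i) = ∑ i ∈ s, H.S (f i) :=
  map_sum H.antipodeAddEquiv f s

theorem Sinv_sum {ι : Type*} (s : Finset ι) (f : ι → A) :
    H.Sinv (∑ i ∈ s, f i) = ∑ i ∈ s, H.Sinv (f i) :=
  map_sum H.antipodeAddEquiv.symm f s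

theorem πL_sum {ι : Type*} (s : Finset ι) (f : ι → A) :
    H.πL (∑ i ∈ s, f i) = ∑ i ∈ s, H.πL (f i) :=
  map_sum (AddMonoidHom.mk' H.πL H.πL_add) f s

theorem πR_sum {ι : Type*} (s : Finset ι) (f : ι → A) :
    H.πR (∑ i ∈ s, f i) = ∑ i ∈ s, H.πR (f i) :=
  map_sum (AddMonoidHom.mk' H.πR H.πR_add) f s

theorem πL_sL_πL (a : A) : H.πL (H.sL (H.πL a)) = H.πL a := by
  simpa using H.πL_runit 1 a

theorem πR_sR_πR (a : A) : H.πR (H.sR (H.πR a)) = H.πR a := by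
  simpa using H.πR_lunit a 1

theorem S_one : H.S 1 = 1 := by
  have h := H.comulL_one (fun u v => H.S u * v)
    (fun u u' v => by rw [H.S_add, add_mul]) (fun u v v' => mul_add _ _ _)
    (fun l u v => by rw [H.S_tL_mul, mul_assoc])
  rwa [H.antipode_L, H.πR_one, H.sR_one, mul_one, eq_comm] at h

theorem S_tL (l : L) : H.S (H.tL l) = H.sL l := by
  simpa [H.S_one] using H.S_tL_mul l 1

theorem S_tR (r : R) : H.S (H.tR r) = H.sR r := by
  simpa [H.S_one] using H.S_tR_mul r 1

theorem sR_πR_tL (l : L) : H.sR (H.πR (H.tL l)) = H.tL l := by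
  -- `γ_L (t_L l) = 1 ⊗ t_L l` and `S 1 = 1`
  have h := H.comulL_bimod (fun u v => H.S u * v)
    (fun u u' v => by rw [H.S_add, add_mul]) (fun u v v' => mul_add _ _ _)
    (fun l u v => by rw [H.S_tL_mul, mul_assoc]) 1 l 1
  have h1 := H.comulL_one (fun u v => H.S u * (H.tL l * v))
    (fun u u' v => by rw [H.S_add, add_mul]) (fun u v v' => by rw [mul_add, mul_add])
    (fun l' u v => by rw [H.S_tL_mul, mul_assoc, ← mul_assoc (H.sL l'), H.commL, mul_assoc])
  simp only [H.sL_one, one_mul, mul_one, H.antipode_L] at h h1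
  rw [h, h1, H.S_one, one_mul]

theorem sR_πR_sR (r : R) : H.sR (H.πR (H.sR r)) = H.sR r := by
  obtain ⟨l, hl⟩ : H.sR r ∈ Set.range H.tL := H.range_tL_sR ▸ Set.mem_range_self r
  rw [← hl, H.sR_πR_tL]

theorem sR_πR_mul_sR (u : A) (r : R) :
    H.sR (H.πR (u * H.sR r)) = H.sR (H.πR u) * H.sR r := by
  rw [← H.πR_lunit, ← H.sR_mul, H.sR_πR_sR]

theorem S_mul_eq_sum_S_mul_sL (x y : A) :
    H.S (x * y) = ∑ i ∈ range (H.nL x), H.S (H.c1 x i * y) * H.sL (H.πL (H.c2 x i)) := by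
  conv_lhs => rw [← H.counitL_right x]
  simp only [sum_mul, H.S_sum, mul_assoc, H.S_tL_mul]

theorem S_eq_sum_sR_mul_S (x : A) :
    H.S x = ∑ i ∈ range (H.nR x), H.sR (H.πR (H.d1 x i)) * H.S (H.d2 x i) := by
  conv_lhs => rw [← H.counitR_right x]
  simp only [H.S_sum, H.S_mul_tR]

theorem S_mul_eq_sum_mixed (x y : A) :
    H.S (x * y) = ∑ i ∈ range (H.nR x), ∑ t ∈ range (H.nL (H.d1 x i)),
      H.S (H.c1 (H.d1 x i) t * y) * H.c2 (H.d1 x i) t * H.S (H.d2 x i) := by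
  rw [H.S_mul_eq_sum_S_mul_sL]
  simp only [← H.antipode_R, mul_sum, ← mul_assoc]
  exact (H.mixed₁ (fun u v w => H.S (u * y) * v * H.S w)
    (fun u u' v w => by rw [add_mul, H.S_add, add_mul, add_mul])
    (fun u v v' w => by rw [mul_add, add_mul])
    (fun u v w w' => by rw [H.S_add, mul_add])
    (fun l u v w => by simp only [mul_assoc, H.S_tL_mul])
    (fun r u v w => by simp only [mul_assoc, H.S_mul_tR]) x).symm

theorem antipode_L_mul (p x : A) :
    ∑ t ∈ range (H.nL p), ∑ m ∈ range (H.nL x),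
      H.S (H.c1 p t * H.c1 x m) * (H.c2 p t * H.c2 x m) = H.sR (H.πR (p * x)) := by
  rw [← H.antipode_L]
  exact (H.comulL_mul (fun u v => H.S u * v)
    (fun u u' v => by rw [H.S_add, add_mul]) (fun u v v' => mul_add _ _ _)
    (fun l u v => by rw [H.S_tL_mul, mul_assoc]) p x).symm

theorem sum_sR_πR_mul_mul_S (p x : A) :
    ∑ j ∈ range (H.nR x), H.sR (H.πR (p * H.d1 x j)) * H.S (H.d2 x j) =
      H.S x * H.sR (H.πR p) := by
  calc ∑ j ∈ range (H.nR x), H.sR (H.πR (p * H.d1 x j)) * H.S (H.d2 x j)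
      = ∑ j ∈ range (H.nR x), H.sR (H.πR (H.sR (H.πR p) * H.d1 x j)) * H.S (H.d2 x j) := by
        simp only [H.πR_lunit]
    _ = ∑ j ∈ range (H.nR x), H.sR (H.πR (H.d1 x j)) * H.S (H.tR (H.πR p) * H.d2 x j) :=
        H.comulR_takeuchi (fun u v => H.sR (H.πR u) * H.S v)
          (fun u u' v => by rw [H.πR_add, H.sR_add, add_mul])
          (fun u v v' => by rw [H.S_add, mul_add])
          (fun r u v => by rw [H.sR_πR_mul_sR, H.S_mul_tR, mul_assoc]) _ x
    _ = H.S x * H.sR (H.πR p) := by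
        simp only [H.S_tR_mul, ← mul_assoc, ← sum_mul, ← H.S_eq_sum_sR_mul_S]

theorem sum_S_c1_mul_mixed (p x : A) :
    ∑ j ∈ range (H.nL x), ∑ k ∈ range (H.nR (H.c2 x j)), ∑ t ∈ range (H.nL p),
      H.S (H.c1 p t * H.c1 x j) * H.c2 p t * H.d1 (H.c2 x j) k * H.S (H.d2 (H.c2 x j) k) =
    ∑ j ∈ range (H.nR x), ∑ m ∈ range (H.nL (H.d1 x j)), ∑ t ∈ range (H.nL p),
      H.S (H.c1 p t * H.c1 (H.d1 x j) m) * H.c2 p t * H.c2 (H.d1 x j) m * H.S (H.d2 x j) := by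
  refine (H.mixed₁
    (fun u v w => ∑ t ∈ range (H.nL p), H.S (H.c1 p t * u) * H.c2 p t * v * H.S w)
    ?_ ?_ ?_ ?_ ?_ x).symm
  · intro u u' v w
    simp only [mul_add, H.S_add, add_mul, sum_add_distrib]
  · intro u v v' w
    simp only [mul_add, add_mul, sum_add_distrib]
  · intro u v w w'
    simp only [H.S_add, mul_add, sum_add_distrib]
  · intro l u v w
    have h := H.comulL_takeuchi (fun a z => H.S (a * u) * z * v * H.S w)
      (fun a a' z => by simp only [add_mul, H.S_add])
      (fun a z z' => by simp only [mul_add, add_mul])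
      (fun l' a z => by simp only [mul_assoc, H.S_tL_mul]) l p
    simpa only [mul_assoc] using h
  · intro r u v w
    simp only [mul_assoc, H.S_mul_tR]

theorem sum_S_c1_mul_mul_c2 (p x : A) :
    ∑ t ∈ range (H.nL p), H.S (H.c1 p t * x) * H.c2 p t = H.S x * H.sR (H.πR p) := by
  calc ∑ t ∈ range (H.nL p), H.S (H.c1 p t * x) * H.c2 p t
      = ∑ j ∈ range (H.nL x), ∑ t ∈ range (H.nL p),
          H.S (H.c1 p t * H.tL (H.πL (H.c2 x j)) * H.c1 x j) * H.c2 p t := by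
        conv_lhs => rw [← H.counitL_right x]
        rw [sum_comm]
        simp only [mul_sum, H.S_sum, sum_mul, mul_assoc]
    _ = ∑ j ∈ range (H.nL x), ∑ k ∈ range (H.nR (H.c2 x j)), ∑ t ∈ range (H.nL p),
          H.S (H.c1 p t * H.c1 x j) * H.c2 p t * H.d1 (H.c2 x j) k *
            H.S (H.d2 (H.c2 x j) k) := by
        refine sum_congr rfl fun j _ => ?_
        rw [H.comulL_takeuchi (fun u v => H.S (u * H.c1 x j) * v)
          (fun u u' v => by rw [add_mul, H.S_add, add_mul]) (fun u v v' => mul_add _ _ _)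
          (fun l u v => by rw [mul_assoc, H.S_tL_mul, mul_assoc]), sum_comm]
        simp only [← H.antipode_R, mul_sum, ← mul_assoc]
    _ = ∑ j ∈ range (H.nR x), ∑ m ∈ range (H.nL (H.d1 x j)), ∑ t ∈ range (H.nL p),
          H.S (H.c1 p t * H.c1 (H.d1 x j) m) * H.c2 p t * H.c2 (H.d1 x j) m *
            H.S (H.d2 x j) := H.sum_S_c1_mul_mixed p x
    _ = ∑ j ∈ range (H.nR x), H.sR (H.πR (p * H.d1 x j)) * H.S (H.d2 x j) := by
        refine sum_congr rfl fun j _ => ?_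
        rw [← H.antipode_L_mul, sum_comm, sum_mul]
        simp only [sum_mul, mul_assoc]
    _ = H.S x * H.sR (H.πR p) := H.sum_sR_πR_mul_mul_S p x

theorem S_mul (x y : A) : H.S (x * y) = H.S y * H.S x := by
  rw [H.S_mul_eq_sum_mixed, H.S_eq_sum_sR_mul_S x, mul_sum]
  simp only [← mul_assoc, ← sum_mul, H.sum_S_c1_mul_mul_c2]

theorem Sinv_mul (x y : A) : H.Sinv (x * y) = H.Sinv y * H.Sinv x := by
  rw [← H.S_leftinv (H.Sinv y * H.Sinv x), H.S_mul, H.S_rightinv, H.S_rightinv]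

theorem Sinv_sL (l : L) : H.Sinv (H.sL l) = H.tL l := by
  rw [← H.S_tL, H.S_leftinv]

theorem Sinv_sR (r : R) : H.Sinv (H.sR r) = H.tR r := by
  rw [← H.S_tR, H.S_leftinv]

theorem πL_S (a : A) : H.πL (H.S a) = H.πL (H.sR (H.πR a)) := by
  conv_lhs => rw [← mul_one a, H.S_mul_eq_sum_S_mul_sL]
  simp only [mul_one, H.πL_sum, H.πL_runit, ← H.antipode_L]

theorem πR_S (a : A) : H.πR (H.S a) = H.πR (H.sL (H.πL a)) := by
  rw [H.S_eq_sum_sR_mul_S, ← H.antipode_R]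
  simp only [H.πR_sum, H.πR_lunit]

theorem πL_Sinv (a : A) : H.πL (H.Sinv a) = H.πL (H.tR (H.πR a)) := by
  conv_lhs => rw [← H.counitL_left a]
  rw [← H.Sinv_sR, ← H.antipode_L]
  simp only [H.Sinv_sum, H.Sinv_mul, H.Sinv_sL, H.S_leftinv, H.πL_sum, H.πL_runit']

theorem πR_Sinv (a : A) : H.πR (H.Sinv a) = H.πR (H.tL (H.πL a)) := by
  conv_lhs => rw [← H.counitR_left a]
  rw [← H.Sinv_sL, ← H.antipode_R]
  simp only [H.Sinv_sum, H.Sinv_mul, H.Sinv_sR, H.S_leftinv, H.πR_sum, H.πR_lunit']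

theorem πL_S_eq_πL_S_iff (a b : A) : H.πL (H.S a) = H.πL (H.S b) ↔ H.πR a = H.πR b := by
  refine ⟨fun h => ?_, fun h => by rw [H.πL_S, H.πL_S, h]⟩
  rw [← H.S_leftinv a, ← H.S_leftinv b, H.πR_Sinv, H.πR_Sinv, h]

theorem πL_Sinv_eq_πL_Sinv_iff (a b : A) :
    H.πL (H.Sinv a) = H.πL (H.Sinv b) ↔ H.πR a = H.πR b := by
  refine ⟨fun h => ?_, fun h => by rw [H.πL_Sinv, H.πL_Sinv, h]⟩
  rw [← H.S_rightinv a, ← H.S_rightinv b, H.πR_S, H.πR_S, h]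

def IsRightIntegral (Υ : A) : Prop := ∀ a, Υ * a = Υ * H.sR (H.πR a)

def IsLeftIntegral (x : A) : Prop := ∀ a, a * x = H.sL (H.πL a) * x

theorem isRightIntegral_iff (Υ : A) :
    H.IsRightIntegral Υ ↔ ∀ a b, H.πR a = H.πR b → Υ * a = Υ * b :=
  ⟨fun h a b hab => by rw [h a, h b, hab], fun h a => h _ _ (H.πR_sR_πR a).symm⟩

theorem isLeftIntegral_iff (x : A) :
    H.IsLeftIntegral x ↔ ∀ a b, H.πL a = H.πL b → a * x = b * x :=
  ⟨fun h a b hab => by rw [h a, h b, hab], fun h a => h _ _ (H.πL_sL_πL a).symm⟩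

theorem isLeftIntegral_S_iff (Υ : A) : H.IsLeftIntegral (H.S Υ) ↔ H.IsRightIntegral Υ := by
  rw [isLeftIntegral_iff, isRightIntegral_iff]
  exact (forall_mul_eq_mul_iff_of_antimultiplicative H.antipodeAddEquiv.toEquiv H.S_mul
    H.πL Υ).trans (forall₂_congr fun a b => imp_congr_left (H.πL_S_eq_πL_S_iff a b))

theorem isLeftIntegral_Sinv_iff (Υ : A) :
    H.IsLeftIntegral (H.Sinv Υ) ↔ H.IsRightIntegral Υ := by
  rw [isLeftIntegral_iff, isRightIntegral_iff]
  exact (forall_mul_eq_mul_iff_of_antimultiplicative H.antipodeAddEquiv.symm.toEquiv H.Sinv_mul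
    H.πL Υ).trans (forall₂_congr fun a b => imp_congr_left (H.πL_Sinv_eq_πL_Sinv_iff a b))

end HopfAlgebroidData

/-- In a Hopf algebroid `(A_L, A_R, S)`, an element `Υ ∈ A` is a right
integral (`Υa = Υ s_R(π_R(a))` for all `a`) iff `S(Υ)` is a left integral
(`a S(Υ) = s_L(π_L(a)) S(Υ)` for all `a`), and iff `S⁻¹(Υ)` is a left integral. -/
theorem right_integral_iff_antipode_left_integral
    {A L R : Type u} [Ring A] [Ring L] [Ring R]
    (H : HopfAlgebroidData A L R) (Υ : A) :
    ((∀ a, Υ * a = Υ * H.sR (H.πR a)) ↔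
      (∀ a, a * H.S Υ = H.sL (H.πL a) * H.S Υ)) ∧
    ((∀ a, Υ * a = Υ * H.sR (H.πR a)) ↔
      (∀ a, a * H.Sinv Υ = H.sL (H.πL a) * H.Sinv Υ)) :=
  ⟨(H.isLeftIntegral_S_iff Υ).symm, (H.isLeftIntegral_Sinv_iff Υ).symm⟩
end
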